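/- arXiv:2210.03996 — 4 statements merged into one kernel-verified Lean document; each statement's English description precedes it below -/
import Mathlib

section
/- For n = 20 one has X(Y(20)) + Y(X(20)) ≠ 2·X(20) + 2·Y(20) − 1; that is, n = 20 is a counterexample to the conjecture that X(Y(n)) + Y(X(n)) = 2X(n) + 2Y(n) − 1 for all n ≥ 1. -/
open Classical

/-- The pair of sequences OEIS A140100 / A140101, defined greedily:
`XY 0 = (0,0)`, `XY 1 = (1,2)`, and for `n > 1`, `XY n = (x, y)` where `x` is least
(and then `y` least) such that `0 < x < y`, neither `x` nor `y` occurs among the earlier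
`X`- or `Y`-values with index `1 ≤ k < n`, and `y - x` occurs among neither the earlier
differences `Y k - X k` nor the earlier sums `Y k + X k`. -/
noncomputable def XY : ℕ → ℕ × ℕ
  | 0 => (0, 0)
  | 1 => (1, 2)
  | n + 2 =>
      let P : ℕ → ℕ → Prop := fun x y =>
        0 < x ∧ x < y ∧
        ∀ k, 1 ≤ k → k < n + 2 →
          (XY k).1 ≠ x ∧ (XY k).1 ≠ y ∧ (XY k).2 ≠ x ∧ (XY k).2 ≠ y ∧
          (XY k).2 - (XY k).1 ≠ y - x ∧ (XY k).2 + (XY k).1 ≠ y - x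
      let x := sInf {x | ∃ y, P x y}
      (x, sInf {y | P x y})
  termination_by n => n
  decreasing_by all_goals omega

/-- Sequence OEIS A140100. -/
noncomputable def X (n : ℕ) : ℕ := (XY n).1

/-- Sequence OEIS A140101. -/
noncomputable def Y (n : ℕ) : ℕ := (XY n).2

def tab : List (ℕ × ℕ) := [(0, 0), (1, 2), (3, 5), (4, 8), (6, 11), (7, 13), (9, 16), (10, 19), (12, 22), (14, 25), (15, 28), (17, 31), (18, 33), (20, 36), (21, 39), (23, 42), (24, 45), (26, 48), (27, 50), (29, 53), (30, 56), (32, 59), (34, 62), (35, 65), (37, 68), (38, 70), (40, 73), (41, 76), (43, 79), (44, 81), (46, 84), (47, 87), (49, 90), (51, 93), (52, 96), (54, 99), (55, 101), (57, 104), (58, 107), (60, 110), (61, 113), (63, 116), (64, 118), (66, 121), (67, 124), (69, 127), (71, 130), (72, 133), (74, 136), (75, 138), (77, 141), (78, 144), (80, 147), (82, 150), (83, 153), (85, 156), (86, 158)]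

def T (k : ℕ) : ℕ × ℕ := tab.getD k (0, 0)

def C (n : ℕ) : Prop :=
  0 < (T n).1 ∧ (T n).1 < (T n).2 ∧
  (∀ k < n, 1 ≤ k →
      (T k).1 ≠ (T n).1 ∧ (T k).1 ≠ (T n).2 ∧ (T k).2 ≠ (T n).1 ∧ (T k).2 ≠ (T n).2 ∧
      (T k).2 - (T k).1 ≠ (T n).2 - (T n).1 ∧ (T k).2 + (T k).1 ≠ (T n).2 - (T n).1) ∧
  (∀ x' < (T n).1, x' = 0 ∨ ∃ k < n, 1 ≤ k ∧ ((T k).1 = x' ∨ (T k).2 = x')) ∧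
  (∀ y' < (T n).2, y' ≤ (T n).1 ∨ ∃ k < n, 1 ≤ k ∧
      ((T k).1 = y' ∨ (T k).2 = y' ∨ (T k).2 - (T k).1 = y' - (T n).1 ∨
        (T k).2 + (T k).1 = y' - (T n).1))

instance C_dec (n : ℕ) : Decidable (C n) := by unfold C; infer_instance

set_option maxRecDepth 100000 in
set_option maxHeartbeats 4000000 in
lemma big : ∀ n < 57, 2 ≤ n → C n := by decide

lemma nat_sInf_eq {s : Set ℕ} {m : ℕ} (h1 : m ∈ s) (h2 : ∀ k < m, k ∉ s) : sInf s = m := by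
  rcases lt_trichotomy (sInf s) m with h | h | h
  · exact absurd (Nat.sInf_mem ⟨m, h1⟩) (h2 _ h)
  · exact h
  · exact absurd (Nat.sInf_le h1) (not_le.2 h)

lemma step (m : ℕ) (ih : ∀ k < m + 2, XY k = T k) (hC : C (m + 2)) :
    XY (m + 2) = T (m + 2) := by
  obtain ⟨hx, hxy, hgood, hxmin, hymin⟩ := hC
  have hmem : 0 < (T (m+2)).1 ∧ (T (m+2)).1 < (T (m+2)).2 ∧
      ∀ k, 1 ≤ k → k < m + 2 →
        (XY k).1 ≠ (T (m+2)).1 ∧ (XY k).1 ≠ (T (m+2)).2 ∧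
        (XY k).2 ≠ (T (m+2)).1 ∧ (XY k).2 ≠ (T (m+2)).2 ∧
        (XY k).2 - (XY k).1 ≠ (T (m+2)).2 - (T (m+2)).1 ∧
        (XY k).2 + (XY k).1 ≠ (T (m+2)).2 - (T (m+2)).1 :=
    ⟨hx, hxy, fun k h1 h2 => by rw [ih k h2]; exact hgood k h2 h1⟩
  simp only [XY]
  have hA : sInf {x | ∃ y, 0 < x ∧ x < y ∧
      ∀ k, 1 ≤ k → k < m + 2 →
        (XY k).1 ≠ x ∧ (XY k).1 ≠ y ∧ (XY k).2 ≠ x ∧ (XY k).2 ≠ y ∧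
        (XY k).2 - (XY k).1 ≠ y - x ∧ (XY k).2 + (XY k).1 ≠ y - x} = (T (m+2)).1 := by
    refine nat_sInf_eq ⟨(T (m+2)).2, hmem⟩ ?_
    rintro x' hx' ⟨y', h1', h2', hall⟩
    rcases hxmin x' hx' with rfl | ⟨k, hk, hk1, hc⟩
    · exact Nat.lt_irrefl 0 h1'
    · have h := hall k hk1 hk
      rw [ih k hk] at h
      rcases hc with hc | hc
      · exact h.1 hc
      · exact h.2.2.1 hc
  rw [hA]
  have hB : sInf {y | 0 < (T (m+2)).1 ∧ (T (m+2)).1 < y ∧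
      ∀ k, 1 ≤ k → k < m + 2 →
        (XY k).1 ≠ (T (m+2)).1 ∧ (XY k).1 ≠ y ∧ (XY k).2 ≠ (T (m+2)).1 ∧ (XY k).2 ≠ y ∧
        (XY k).2 - (XY k).1 ≠ y - (T (m+2)).1 ∧
        (XY k).2 + (XY k).1 ≠ y - (T (m+2)).1} = (T (m+2)).2 := by
    apply nat_sInf_eq hmem
    rintro y' hy' ⟨h0', h2', hall⟩
    rcases hymin y' hy' with h | ⟨k, hk, hk1, hc⟩
    · exact absurd h2' (not_lt.2 h)
    · have h := hall k hk1 hk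
      rw [ih k hk] at h
      rcases hc with hc | hc | hc | hc
      · exact h.2.1 hc
      · exact h.2.2.2.1 hc
      · exact h.2.2.2.2.1 hc
      · exact h.2.2.2.2.2 hc
  rw [hB]

lemma upto : ∀ n ≤ 57, ∀ k < n, XY k = T k := by
  intro n
  induction n with
  | zero => intro _ k hk; omega
  | succ n ih =>
    intro hn k hk
    rcases Nat.lt_or_ge k n with h | h
    · exact ih (by omega) k h
    · have hkn : k = n := by omega
      subst hkn
      match k, hk, hn with
      | 0, _, _ => simp only [XY]; rfl
      | 1, _, _ => simp only [XY]; rfl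
      | (m + 2), hk, hn =>
        exact step m (fun j hj => ih (by omega) j hj)
          (big (m + 2) (by omega) (by omega))

theorem rust_counterexample :
    (X (Y 20) : ℤ) + (Y (X 20) : ℤ) ≠ 2 * (X 20 : ℤ) + 2 * (Y 20 : ℤ) - 1 := by
  have h20 := upto 57 le_rfl 20 (by norm_num)
  have h30 := upto 57 le_rfl 30 (by norm_num)
  have h56 := upto 57 le_rfl 56 (by norm_num)
  have hx20 : X 20 = 30 := by unfold X; rw [h20]; rfl
  have hy20 : Y 20 = 56 := by unfold Y; rw [h20]; rfl
  have hx56 : X 56 = 86 := by unfold X; rw [h56]; rfl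
  have hy30 : Y 30 = 84 := by unfold Y; rw [h30]; rfl
  rw [hy20, hx20, hx56, hy30]
  norm_num
end

section
/- The sets {X(n) : n ≥ 1} and {Y(n) : n ≥ 1} are disjoint and their union is the set ℕ = {1, 2, 3, …} of all positive integers. -/
open Classical

def Q (n : ℕ) (x y : ℕ) : Prop :=
  0 < x ∧ x < y ∧
  ∀ k, 1 ≤ k → k < n + 2 →
    (XY k).1 ≠ x ∧ (XY k).1 ≠ y ∧ (XY k).2 ≠ x ∧ (XY k).2 ≠ y ∧
    (XY k).2 - (XY k).1 ≠ y - x ∧ (XY k).2 + (XY k).1 ≠ y - x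

lemma XY_eq (n : ℕ) :
    XY (n+2) = (sInf {x | ∃ y, Q n x y}, sInf {y | Q n (sInf {x | ∃ y, Q n x y}) y}) := by
  rw [XY]; rfl

lemma XY_one : XY 1 = (1, 2) := by rw [XY]

lemma sum_bound (n k : ℕ) (hk : k < n + 2) :
    (XY k).1 + (XY k).2 < (∑ j ∈ Finset.range (n+2), ((XY j).1 + (XY j).2)) + 1 := by
  have := Finset.single_le_sum (f := fun j => (XY j).1 + (XY j).2)
    (fun i _ => Nat.zero_le _) (Finset.mem_range.mpr hk)
  have h2 : (XY k).1 + (XY k).2 ≤ ∑ j ∈ Finset.range (n+2), ((XY j).1 + (XY j).2) := this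
  omega

lemma feasible (n x : ℕ) (hx : 0 < x)
    (h : ∀ k, 1 ≤ k → k < n + 2 → (XY k).1 ≠ x ∧ (XY k).2 ≠ x) :
    ∃ y, Q n x y := by
  refine ⟨x + ((∑ j ∈ Finset.range (n+2), ((XY j).1 + (XY j).2)) + 1), hx, by omega,
    fun k hk1 hk2 => ?_⟩
  have hb := sum_bound n k hk2
  have := h k hk1 hk2
  omega

lemma XY_spec (n : ℕ) : Q n (XY (n+2)).1 (XY (n+2)).2 := by
  have hne : {x | ∃ y, Q n x y}.Nonempty := by
    refine ⟨(∑ j ∈ Finset.range (n+2), ((XY j).1 + (XY j).2)) + 1,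
      feasible n _ (by omega) fun k hk1 hk2 => ?_⟩
    have hb := sum_bound n k hk2
    omega
  obtain ⟨y, hy⟩ := Nat.sInf_mem hne
  have h2 : Q n (sInf {x | ∃ y, Q n x y}) (sInf {y | Q n (sInf {x | ∃ y, Q n x y}) y}) :=
    Nat.sInf_mem (⟨y, hy⟩ : {y | Q n (sInf {x | ∃ y, Q n x y}) y}.Nonempty)
  rw [XY_eq]
  exact h2

lemma X_min (n x : ℕ) (h : ∃ y, Q n x y) : (XY (n+2)).1 ≤ x := by
  rw [XY_eq]
  exact Nat.sInf_le h

lemma X_pos {n : ℕ} (hn : 1 ≤ n) : 0 < X n ∧ X n < Y n := by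
  match n, hn with
  | 1, _ => simp [X, Y, XY_one]
  | (m+2), _ =>
    obtain ⟨h1, h2, _⟩ := XY_spec m
    exact ⟨h1, h2⟩

lemma XY_ne {k n : ℕ} (hk : 1 ≤ k) (hkn : k < n) :
    X k ≠ X n ∧ X k ≠ Y n ∧ Y k ≠ X n ∧ Y k ≠ Y n := by
  match n, hkn with
  | 1, hkn => omega
  | (m+2), hkn =>
    obtain ⟨_, _, h⟩ := XY_spec m
    obtain ⟨a, b, c, d, _, _⟩ := h k hk hkn
    exact ⟨a, b, c, d⟩

theorem X_Y_complementary :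
    Disjoint {m : ℕ | ∃ n, 1 ≤ n ∧ X n = m} {m : ℕ | ∃ n, 1 ≤ n ∧ Y n = m} ∧
    {m : ℕ | ∃ n, 1 ≤ n ∧ X n = m} ∪ {m : ℕ | ∃ n, 1 ≤ n ∧ Y n = m}
      = {m : ℕ | 1 ≤ m} := by
  constructor
  · rw [Set.disjoint_left]
    rintro m ⟨a, ha1, rfl⟩ ⟨b, hb1, hba⟩
    rcases lt_trichotomy a b with h | h | h
    · exact (XY_ne ha1 h).2.1 hba.symm
    · subst h
      have := X_pos ha1
      omega
    · exact (XY_ne hb1 h).2.2.1 hba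
  · ext m
    simp only [Set.mem_union, Set.mem_setOf_eq]
    constructor
    · rintro (⟨a, ha1, rfl⟩ | ⟨a, ha1, rfl⟩) <;> have := X_pos ha1 <;> omega
    · intro hm
      by_contra hc
      push_neg at hc
      obtain ⟨hX, hY⟩ := hc
      -- m is never an X or Y value, so X j ≤ m for all j ≥ 2
      have hle : ∀ j ∈ Finset.Icc 2 (m + 2), X j ≤ m := by
        intro j hj
        rw [Finset.mem_Icc] at hj
        obtain ⟨j', rfl⟩ : ∃ j', j = j' + 2 := ⟨j - 2, by omega⟩
        refine X_min j' m (feasible j' m hm fun k hk1 hk2 => ?_)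
        exact ⟨fun h => hX k hk1 h, fun h => hY k hk1 h⟩
      have hmem : ∀ j ∈ Finset.Icc 2 (m + 2), X j ∈ Finset.Icc 1 m := by
        intro j hj
        rw [Finset.mem_Icc] at hj ⊢
        have := X_pos (show 1 ≤ j by omega)
        exact ⟨by omega, hle j (by rw [Finset.mem_Icc]; omega)⟩
      have hinj : Set.InjOn X (Finset.Icc 2 (m + 2)) := by
        intro a ha b hb hab
        simp only [Finset.coe_Icc, Set.mem_Icc] at ha hb
        by_contra hne
        rcases lt_or_gt_of_ne hne with h | h
        · exact (XY_ne (show 1 ≤ a by omega) h).1 hab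
        · exact (XY_ne (show 1 ≤ b by omega) h).1 hab.symm
      have := Finset.card_le_card_of_injOn X hmem hinj
      simp [Nat.card_Icc] at this
end

section
/- For every integer n ≥ 1, Y(n) = a(n) + n, where a(n) is one more than the position (indexed from 0) of the n-th occurrence of the symbol 0 in the infinite Tribonacci word TR (so the first occurrence corresponds to n = 1). -/
open Classical

/-- The morphism 0 ↦ 01, 1 ↦ 02, 2 ↦ 0. -/
def tribMorph : ℕ → List ℕ
  | 0 => [0, 1]
  | 1 => [0, 2]
  | _ => [0]

/-- The infinite Tribonacci word TR = 0102010010201⋯, the fixed point of the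
morphism 0 ↦ 01, 1 ↦ 02, 2 ↦ 0 starting with 0. -/
def TR (n : ℕ) : ℕ := ((fun l : List ℕ => (l.map tribMorph).flatten)^[n + 1] [0]).getD n 0

/-- For `n ≥ 1`, one more than the position (indexed from 0) of the `n`-th occurrence
of the symbol `s` in TR; and `0` at `n = 0`. -/
noncomputable def posSeq (s : ℕ) (n : ℕ) : ℕ :=
  if n = 0 then 0 else Nat.nth (fun m => TR m = s) (n - 1) + 1

/-!
Since `TR = σ(TR)`, the word `TR` is the concatenation of the blocks `σ(TR m)`, and the block of
`TR m` starts at `b(m) = m + #₀(m) + #₁(m)`, where `#ₐ(m)` counts the letters `a` among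
`TR 0, …, TR (m - 1)`. Each block begins with its only `0`, so the zeros of `TR` sit exactly at
the `b(m)` and `a(n) = b(n - 1) + 1`; a `1` sits at `b(m) + 1` exactly when `TR m = 0`.

Put `x(n) = n + #₀(n - 1)` and `d(n) = n + #₁(n - 1)`. Both increase by `1` or `2` at each step:
`x` jumps by `2` right after the index `b(j) + 1`, skipping the value `x(j + 1) + d(j + 1)`, and
`d` jumps by `2` right after `b(b(j)) + 2`, skipping `2 x(j + 1) + d(j + 1)`. Hence `x` and
`y = x + d` partition the positive integers, and so do `d` and `y + x`. These two partitions force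
the greedy choice: every smaller candidate for `X(n)` is an earlier `X` or `Y`, and every smaller
candidate for `Y(n) - X(n)` is an earlier difference or sum. So `(X, Y) = (x, x + d)`, and
`Y(n) = b(n - 1) + n + 1 = a(n) + n`.
-/

theorem exists_le_lt_succ_of_strictMono {f : ℕ → ℕ} (hf : StrictMono f) {p : ℕ} (hp : f 0 ≤ p) :
    ∃ n, f n ≤ p ∧ p < f (n + 1) := by
  have hex : ∃ n, p < f (n + 1) := ⟨p, (Nat.lt_succ_self p).trans_le (hf.id_le (p + 1))⟩
  refine ⟨Nat.find hex, ?_, Nat.find_spec hex⟩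
  rcases hn : Nat.find hex with _ | n
  · exact hp
  · exact not_lt.1 (Nat.find_min hex (hn ▸ Nat.lt_succ_self n))

def Complementary (u v : ℕ → ℕ) : Prop :=
  ∀ m, 1 ≤ m → ((∃ n, 1 ≤ n ∧ u n = m) ↔ ¬ ∃ k, 1 ≤ k ∧ v k = m)

namespace Complementary

variable {u v : ℕ → ℕ}

theorem exists_or (h : Complementary u v) {m : ℕ} (hm : 1 ≤ m) :
    (∃ n, 1 ≤ n ∧ u n = m) ∨ ∃ k, 1 ≤ k ∧ v k = m :=
  or_iff_not_imp_right.2 (h m hm).2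

theorem ne (h : Complementary u v) {n k : ℕ} (hn : 1 ≤ n) (hk : 1 ≤ k) (hu : 1 ≤ u n) :
    u n ≠ v k := fun huv => (h _ hu).1 ⟨n, hn, rfl⟩ ⟨k, hk, huv.symm⟩

end Complementary

theorem complementary_of_gaps {u v g : ℕ → ℕ} (h0 : u 0 = 0)
    (hstep : ∀ n, u (n + 1) = u n + 1 + if n ∈ Set.range g then 1 else 0)
    (hv : ∀ k, v (k + 1) = u (g k) + 1) : Complementary u v := by
  have hmono : StrictMono u := strictMono_nat_of_lt_succ fun n => by rw [hstep n]; omega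
  have hgap (k : ℕ) : u (g k + 1) = u (g k) + 2 := by rw [hstep, if_pos ⟨k, rfl⟩]
  have not_between (a b : ℕ) (h₁ : u a < u b) (h₂ : u b < u (a + 1)) : False := by
    have := hmono.lt_iff_lt.1 h₁
    have := hmono.lt_iff_lt.1 h₂
    omega
  intro m hm
  obtain ⟨n, hnm, hmn⟩ := exists_le_lt_succ_of_strictMono hmono (h0 ▸ Nat.zero_le m)
  rcases hnm.eq_or_lt with rfl | hlt
  · refine iff_of_true ⟨n, Nat.one_le_iff_ne_zero.2 fun hn => by simp [hn, h0] at hm, rfl⟩ ?_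
    rintro ⟨_ | k, hk, hvk⟩
    · omega
    · rw [hv] at hvk
      exact not_between (g k) n (by omega) (by rw [hgap]; omega)
  · obtain ⟨k, rfl⟩ : n ∈ Set.range g := by
      by_contra hg
      rw [hstep, if_neg hg] at hmn
      omega
    refine iff_of_false ?_ (not_not.2 ⟨k + 1, by omega, by rw [hv]; rw [hgap] at hmn; omega⟩)
    rintro ⟨n', -, rfl⟩
    exact not_between _ _ hlt hmn

structure DoublyComplementary (x d : ℕ → ℕ) : Prop where
  x_one : x 1 = 1
  d_one : d 1 = 1
  strictMono_x : StrictMono x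
  strictMono_d : StrictMono d
  complementary_x : Complementary x fun n => x n + d n
  complementary_d : Complementary d fun n => x n + d n + x n

def Admissible (n x y : ℕ) : Prop :=
  0 < x ∧ x < y ∧
  ∀ k, 1 ≤ k → k < n →
    (XY k).1 ≠ x ∧ (XY k).1 ≠ y ∧ (XY k).2 ≠ x ∧ (XY k).2 ≠ y ∧
    (XY k).2 - (XY k).1 ≠ y - x ∧ (XY k).2 + (XY k).1 ≠ y - x

theorem XY_add_two (n : ℕ) : XY (n + 2) =
    (sInf {x | ∃ y, Admissible (n + 2) x y},
      sInf {y | Admissible (n + 2) (sInf {x | ∃ y, Admissible (n + 2) x y}) y}) := by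
  rw [XY]
  rfl

theorem lex_sInf_eq {P : ℕ → ℕ → Prop} {a b : ℕ} (hab : P a b) (ha : ∀ x < a, ∀ y, ¬ P x y)
    (hb : ∀ y < b, ¬ P a y) :
    (sInf {x | ∃ y, P x y}, sInf {y | P (sInf {x | ∃ y, P x y}) y}) = (a, b) := by
  have hx : sInf {x | ∃ y, P x y} = a :=
    IsLeast.csInf_eq ⟨⟨b, hab⟩, fun x ⟨y, hy⟩ => not_lt.1 fun h => ha x h y hy⟩
  rw [hx, Prod.mk.injEq]
  exact ⟨rfl, IsLeast.csInf_eq ⟨hab, fun y hy => not_lt.1 fun h => hb y h hy⟩⟩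

namespace DoublyComplementary

variable {x d : ℕ → ℕ}

theorem strictMono_y (h : DoublyComplementary x d) : StrictMono fun n => x n + d n :=
  h.strictMono_x.add h.strictMono_d

theorem one_le_x (h : DoublyComplementary x d) {n : ℕ} (hn : 1 ≤ n) : 1 ≤ x n :=
  h.x_one ▸ h.strictMono_x.monotone hn

theorem one_le_d (h : DoublyComplementary x d) {n : ℕ} (hn : 1 ≤ n) : 1 ≤ d n :=
  h.d_one ▸ h.strictMono_d.monotone hn

variable {n : ℕ}

theorem admissible (h : DoublyComplementary x d) (hn : 1 ≤ n)
    (hprev : ∀ k, 1 ≤ k → k < n → XY k = (x k, x k + d k)) :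
    Admissible n (x n) (x n + d n) := by
  have hxn := h.one_le_x hn
  refine ⟨hxn, by have := h.one_le_d hn; omega, fun k hk hkn => ?_⟩
  have hxk := h.one_le_x hk
  rw [hprev k hk hkn]
  refine ⟨(h.strictMono_x hkn).ne, h.complementary_x.ne hk hn hxk,
    (h.complementary_x.ne hn hk hxn).symm, (h.strictMono_y hkn).ne, ?_, ?_⟩
  · simpa using (h.strictMono_d hkn).ne
  · simpa using (h.complementary_d.ne hn hk (h.one_le_d hn)).symm

theorem not_admissible_of_lt_x (h : DoublyComplementary x d)
    (hprev : ∀ k, 1 ≤ k → k < n → XY k = (x k, x k + d k)) (x' : ℕ) (hx' : x' < x n)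
    (y' : ℕ) : ¬ Admissible n x' y' := by
  rintro ⟨hpos, -, hfresh⟩
  rcases h.complementary_x.exists_or hpos with ⟨k, hk, rfl⟩ | ⟨k, hk, rfl⟩
  · have hkn := h.strictMono_x.lt_iff_lt.1 hx'
    simpa [hprev k hk hkn] using (hfresh k hk hkn).1
  · have hkn := h.strictMono_y.lt_iff_lt.1 (hx'.trans_le (Nat.le_add_right (x n) (d n)))
    simpa [hprev k hk hkn] using (hfresh k hk hkn).2.2.1

theorem not_admissible_of_lt_y (h : DoublyComplementary x d)
    (hprev : ∀ k, 1 ≤ k → k < n → XY k = (x k, x k + d k)) (y' : ℕ) (hy' : y' < x n + d n) :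
    ¬ Admissible n (x n) y' := by
  rintro ⟨-, hxy, hfresh⟩
  rcases h.complementary_d.exists_or (m := y' - x n) (by omega) with ⟨k, hk, hdk⟩ | ⟨k, hk, hsk⟩
  · have hkn := h.strictMono_d.lt_iff_lt.1 (show d k < d n by omega)
    have := (hfresh k hk hkn).2.2.2.2.1
    rw [hprev k hk hkn] at this
    dsimp only at this
    omega
  · have hkn := h.strictMono_d.lt_iff_lt.1 (show d k < d n by have := h.one_le_x hk; omega)
    have := (hfresh k hk hkn).2.2.2.2.2
    rw [hprev k hk hkn] at this
    dsimp only at this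
    omega

theorem XY_eq (h : DoublyComplementary x d) (n : ℕ) (hn : 1 ≤ n) :
    XY n = (x n, x n + d n) := by
  induction n using Nat.strong_induction_on with
  | _ n ih =>
    match n, hn with
    | 1, _ => rw [XY, h.x_one, h.d_one]
    | m + 2, hn =>
      have hprev (k : ℕ) (hk : 1 ≤ k) (hkn : k < m + 2) := ih k hkn hk
      rw [XY_add_two, lex_sInf_eq (h.admissible hn hprev) (h.not_admissible_of_lt_x hprev)
        (h.not_admissible_of_lt_y hprev)]

end DoublyComplementary

namespace Tribonacci

def step (l : List ℕ) : List ℕ := (l.map tribMorph).flatten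

def word (k : ℕ) : List ℕ := step^[k] [0]

theorem word_succ (k : ℕ) : word (k + 1) = step (word k) :=
  Function.iterate_succ_apply' step k [0]

theorem step_append (l l' : List ℕ) : step (l ++ l') = step l ++ step l' := by
  simp [step]

theorem step_singleton (c : ℕ) : step [c] = tribMorph c := by simp [step]

theorem length_tribMorph (c : ℕ) : (tribMorph c).length = 1 + [c].count 0 + [c].count 1 := by
  rcases c with _ | _ | c <;> simp [tribMorph]

theorem count_zero_tribMorph (c : ℕ) : (tribMorph c).count 0 = [c].length := by
  rcases c with _ | _ | c <;> simp [tribMorph]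

theorem count_one_tribMorph (c : ℕ) : (tribMorph c).count 1 = [c].count 0 := by
  rcases c with _ | _ | c <;> simp [tribMorph]

theorem step_prefix_step {l l' : List ℕ} (h : l <+: l') : step l <+: step l' := by
  obtain ⟨t, rfl⟩ := h
  exact ⟨step t, (step_append l t).symm⟩

theorem length_step (l : List ℕ) : (step l).length = l.length + l.count 0 + l.count 1 := by
  induction l with
  | nil => rfl
  | cons c l ih =>
    rw [← List.singleton_append, step_append, List.length_append, step_singleton,
      length_tribMorph, ih, List.length_append, List.count_append, List.count_append]
    simp only [List.length_singleton]
    omega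

theorem count_zero_step (l : List ℕ) : (step l).count 0 = l.length := by
  induction l with
  | nil => rfl
  | cons c l ih =>
    rw [← List.singleton_append, step_append, List.count_append, step_singleton,
      count_zero_tribMorph, ih, List.length_append]

theorem count_one_step (l : List ℕ) : (step l).count 1 = l.count 0 := by
  induction l with
  | nil => rfl
  | cons c l ih =>
    rw [← List.singleton_append, step_append, List.count_append, step_singleton,
      count_one_tribMorph, ih, List.count_append]

theorem word_prefix_word_succ (k : ℕ) : word k <+: word (k + 1) := by
  induction k with
  | zero => exact ⟨[1], rfl⟩
  | succ k ih => rw [word_succ, word_succ (k + 1)]; exact step_prefix_step ih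

theorem word_prefix_word {k j : ℕ} (h : k ≤ j) : word k <+: word j := by
  induction j, h using Nat.le_induction with
  | base => exact List.prefix_rfl
  | succ j _ ih => exact ih.trans (word_prefix_word_succ j)

theorem lt_length_word (k : ℕ) : k < (word k).length := by
  induction k with
  | zero => simp [word]
  | succ k ih =>
    have h0 : 0 < (word k).count 0 :=
      List.count_pos_iff.2 ((word_prefix_word (Nat.zero_le k)).subset (by simp [word]))
    rw [word_succ, length_step]
    omega

def trPrefix (m : ℕ) : List ℕ := (List.range m).map TR

theorem length_trPrefix (m : ℕ) : (trPrefix m).length = m := by simp [trPrefix]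

theorem trPrefix_succ (m : ℕ) : trPrefix (m + 1) = trPrefix m ++ [TR m] := by
  simp [trPrefix, List.range_succ]

theorem getElem?_trPrefix {m i : ℕ} (hi : i < m) : (trPrefix m)[i]? = some (TR i) := by
  simp [trPrefix, hi]

theorem take_trPrefix (a b : ℕ) : (trPrefix b).take a = trPrefix (min a b) := by
  simp [trPrefix, ← List.map_take]

theorem count_trPrefix (a m : ℕ) : (trPrefix m).count a = Nat.count (fun k => TR k = a) m := by
  simp only [trPrefix, Nat.count, List.count, List.countP_map, Function.comp_def]
  congr 1

theorem word_eq_trPrefix (k : ℕ) : word k = trPrefix (word k).length := by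
  refine List.ext_getElem (length_trPrefix _).symm fun i hk _ => ?_
  simp only [trPrefix, List.getElem_map, List.getElem_range]
  have hi : i < (word (i + 1)).length := (Nat.lt_succ_self i).trans (lt_length_word _)
  have hTR : TR i = (word (i + 1)).getD i 0 := rfl
  rw [hTR, List.getD_eq_getElem _ _ hi]
  rcases le_total k (i + 1) with hki | hik
  · exact (word_prefix_word hki).getElem hk
  · exact ((word_prefix_word hik).getElem hi).symm

theorem eq_trPrefix_of_prefix_word {l : List ℕ} {k : ℕ} (h : l <+: word k) :
    l = trPrefix l.length := by
  calc l = (word k).take l.length := List.prefix_iff_eq_take.1 h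
    _ = trPrefix l.length := by
      rw [word_eq_trPrefix k, take_trPrefix, min_eq_left h.length_le]

theorem trPrefix_prefix_word (m : ℕ) : trPrefix m <+: word m := by
  have h := List.take_prefix m (trPrefix (word m).length)
  rwa [take_trPrefix, min_eq_left (lt_length_word m).le, ← word_eq_trPrefix] at h

/-- `TR = σ(TR)`: the image of `TR m` occupies the positions from `blockStart m` on. -/
def blockStart (m : ℕ) : ℕ := (step (trPrefix m)).length

theorem step_trPrefix (m : ℕ) : step (trPrefix m) = trPrefix (blockStart m) := by
  refine eq_trPrefix_of_prefix_word (k := m + 1) ?_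
  rw [word_succ]
  exact step_prefix_step (trPrefix_prefix_word m)

theorem blockStart_eq (m : ℕ) :
    blockStart m = m + (trPrefix m).count 0 + (trPrefix m).count 1 := by
  rw [blockStart, length_step, length_trPrefix]

theorem blockStart_succ (m : ℕ) :
    blockStart (m + 1) = blockStart m + (tribMorph (TR m)).length := by
  simp [blockStart, trPrefix_succ, step]

theorem strictMono_blockStart : StrictMono blockStart :=
  strictMono_nat_of_lt_succ fun m => by
    rw [blockStart_succ, length_tribMorph]
    omega

theorem count_zero_trPrefix_blockStart (m : ℕ) : (trPrefix (blockStart m)).count 0 = m := by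
  rw [← step_trPrefix, count_zero_step, length_trPrefix]

theorem count_one_trPrefix_blockStart (m : ℕ) :
    (trPrefix (blockStart m)).count 1 = (trPrefix m).count 0 := by
  rw [← step_trPrefix, count_one_step]

theorem TR_blockStart_add {m i : ℕ} (hi : i < (tribMorph (TR m)).length) :
    TR (blockStart m + i) = (tribMorph (TR m))[i] := by
  have h := getElem?_trPrefix (m := blockStart (m + 1)) (i := blockStart m + i)
    (by rw [blockStart_succ]; omega)
  rw [← step_trPrefix, trPrefix_succ, step_append, blockStart,
    List.getElem?_append_right (Nat.le_add_right _ _)] at h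
  simpa [step, hi, blockStart] using h.symm

theorem exists_eq_blockStart_add (p : ℕ) :
    ∃ m i, ∃ _ : i < (tribMorph (TR m)).length, blockStart m + i = p := by
  obtain ⟨m, hmp, hpm⟩ := exists_le_lt_succ_of_strictMono strictMono_blockStart (Nat.zero_le p)
  rw [blockStart_succ] at hpm
  exact ⟨m, p - blockStart m, by omega, by omega⟩

theorem getElem_tribMorph_eq_zero_iff {c i : ℕ} (hi : i < (tribMorph c).length) :
    (tribMorph c)[i] = 0 ↔ i = 0 := by
  rcases c with _ | _ | c <;> simp only [tribMorph, List.length_cons, List.length_nil] at hi <;>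
    interval_cases i <;> simp [tribMorph]

theorem getElem_tribMorph_eq_one_iff {c i : ℕ} (hi : i < (tribMorph c).length) :
    (tribMorph c)[i] = 1 ↔ c = 0 ∧ i = 1 := by
  rcases c with _ | _ | c <;> simp only [tribMorph, List.length_cons, List.length_nil] at hi <;>
    interval_cases i <;> simp [tribMorph]

theorem TR_blockStart (m : ℕ) : TR (blockStart m) = 0 := by
  have hpos : 0 < (tribMorph (TR m)).length := by rw [length_tribMorph]; omega
  exact (TR_blockStart_add hpos).trans ((getElem_tribMorph_eq_zero_iff hpos).2 rfl)

theorem TR_blockStart_add_one {m : ℕ} (hm : TR m = 0) : TR (blockStart m + 1) = 1 := by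
  have hlen : 1 < (tribMorph (TR m)).length := by simp [hm, tribMorph]
  exact (TR_blockStart_add hlen).trans ((getElem_tribMorph_eq_one_iff hlen).2 ⟨hm, rfl⟩)

theorem TR_eq_zero_iff {p : ℕ} : TR p = 0 ↔ ∃ m, blockStart m = p := by
  refine ⟨fun h => ?_, fun ⟨m, hm⟩ => hm ▸ TR_blockStart m⟩
  obtain ⟨m, i, hi, rfl⟩ := exists_eq_blockStart_add p
  rw [TR_blockStart_add hi, getElem_tribMorph_eq_zero_iff hi] at h
  exact ⟨m, by rw [h, Nat.add_zero]⟩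

theorem TR_eq_one_iff {p : ℕ} : TR p = 1 ↔ ∃ m, TR m = 0 ∧ blockStart m + 1 = p := by
  refine ⟨fun h => ?_, fun ⟨m, hm, hmp⟩ => hmp ▸ TR_blockStart_add_one hm⟩
  obtain ⟨m, i, hi, rfl⟩ := exists_eq_blockStart_add p
  rw [TR_blockStart_add hi, getElem_tribMorph_eq_one_iff hi] at h
  exact ⟨m, h.1, by rw [h.2]⟩

def shiftedCount (a : ℕ) : ℕ → ℕ
  | 0 => 0
  | n + 1 => n + 1 + (trPrefix n).count a

theorem shiftedCount_succ_succ (a m : ℕ) :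
    shiftedCount a (m + 2) = shiftedCount a (m + 1) + 1 + if TR m = a then 1 else 0 := by
  simp only [shiftedCount, trPrefix_succ, List.count_append, List.count_singleton, beq_iff_eq]
  omega

theorem strictMono_shiftedCount (a : ℕ) : StrictMono (shiftedCount a) :=
  strictMono_nat_of_lt_succ fun n => by
    rcases n with _ | m
    · simp [shiftedCount]
    · rw [shiftedCount_succ_succ]
      omega

theorem complementary_shiftedCount_zero :
    Complementary (shiftedCount 0) fun n => shiftedCount 0 n + shiftedCount 1 n := by
  refine complementary_of_gaps (g := fun j => blockStart j + 1) rfl (fun n => ?_) (fun k => ?_)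
  · rcases n with _ | m
    · simp [shiftedCount, trPrefix]
    · simp [shiftedCount_succ_succ, TR_eq_zero_iff]
  · simp only [shiftedCount]
    rw [count_zero_trPrefix_blockStart, blockStart_eq]
    omega

theorem complementary_shiftedCount_one :
    Complementary (shiftedCount 1) fun n =>
      shiftedCount 0 n + shiftedCount 1 n + shiftedCount 0 n := by
  refine complementary_of_gaps (g := fun j => blockStart (blockStart j) + 2) rfl (fun n => ?_)
    (fun k => ?_)
  · rcases n with _ | m
    · simp [shiftedCount, trPrefix]
    · simp [shiftedCount_succ_succ, TR_eq_one_iff, TR_eq_zero_iff]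
  · simp only [shiftedCount]
    rw [trPrefix_succ, List.count_append, count_one_trPrefix_blockStart, TR_blockStart,
      blockStart_eq (blockStart k), count_zero_trPrefix_blockStart, count_one_trPrefix_blockStart,
      blockStart_eq k, List.count_cons_of_ne zero_ne_one, List.count_nil]
    omega

theorem doublyComplementary : DoublyComplementary (shiftedCount 0) (shiftedCount 1) where
  x_one := by simp [shiftedCount, trPrefix]
  d_one := by simp [shiftedCount, trPrefix]
  strictMono_x := strictMono_shiftedCount 0
  strictMono_d := strictMono_shiftedCount 1
  complementary_x := complementary_shiftedCount_zero
  complementary_d := complementary_shiftedCount_one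

theorem nth_TR_eq_zero (j : ℕ) : Nat.nth (fun k => TR k = 0) j = blockStart j := by
  have h := Nat.nth_count (p := fun k => TR k = 0) (TR_blockStart j)
  rwa [← count_trPrefix, count_zero_trPrefix_blockStart] at h

end Tribonacci

theorem Y_eq_a_add_n (n : ℕ) (hn : 1 ≤ n) : Y n = posSeq 0 n + n := by
  obtain ⟨m, rfl⟩ : ∃ m, n = m + 1 := ⟨n - 1, by omega⟩
  rw [Y, Tribonacci.doublyComplementary.XY_eq (m + 1) hn, posSeq, if_neg m.succ_ne_zero,
    Nat.add_sub_cancel, Tribonacci.nth_TR_eq_zero]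
  simp only [Tribonacci.shiftedCount, Tribonacci.blockStart_eq]
  omega
end

section
/- For every integer n ≥ 0, X(n) = b(n) − a(n), where for n ≥ 1, a(n) (respectively b(n)) is one more than the position (indexed from 0) of the n-th occurrence of the symbol 0 (respectively 1) in the infinite Tribonacci word TR, and a(0) = b(0) = 0. -/
open Classical

namespace TribAux

def sig (l : List ℕ) : List ℕ := (l.map tribMorph).flatten

def W (k : ℕ) : List ℕ := sig^[k] [0]

lemma sig_append (l₁ l₂ : List ℕ) : sig (l₁ ++ l₂) = sig l₁ ++ sig l₂ := by
  simp [sig]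

lemma sig_cons (a : ℕ) (l : List ℕ) : sig (a :: l) = tribMorph a ++ sig l := by
  simp [sig]

lemma sig_prefix {l₁ l₂ : List ℕ} (h : l₁ <+: l₂) : sig l₁ <+: sig l₂ := by
  obtain ⟨t, rfl⟩ := h
  rw [sig_append]; exact ⟨sig t, rfl⟩

lemma W_zero : W 0 = [0] := rfl

lemma W_succ (k : ℕ) : W (k + 1) = sig (W k) := Function.iterate_succ_apply' _ _ _

lemma W_prefix_succ (k : ℕ) : W k <+: W (k + 1) := by
  induction k with
  | zero => exact ⟨[1], rfl⟩
  | succ k ih => rw [W_succ, W_succ]; exact sig_prefix ih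

lemma W_prefix {j k : ℕ} (h : j ≤ k) : W j <+: W k := by
  induction k with
  | zero => simp_all
  | succ k ih =>
      rcases Nat.lt_or_ge j (k+1) with h'|h'
      · exact (ih (Nat.lt_succ_iff.mp h')).trans (W_prefix_succ k)
      · have : j = k + 1 := le_antisymm h h'
        subst this; exact List.prefix_refl _

lemma tribMorph_length_pos (a : ℕ) : 0 < (tribMorph a).length := by
  rcases a with _|_|a <;> simp [tribMorph]

lemma length_sig_ge (l : List ℕ) : l.length ≤ (sig l).length := by
  induction l with
  | nil => simp [sig]
  | cons a t ih =>
      rw [sig_cons]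
      simp only [List.length_append, List.length_cons]
      have := tribMorph_length_pos a
      omega

lemma W_head (k : ℕ) : [0] <+: W k := by
  induction k with
  | zero => exact List.prefix_refl _
  | succ k ih =>
      obtain ⟨t, ht⟩ := ih
      rw [W_succ, ← ht, sig_append]
      have : sig [0] = [0, 1] := rfl
      rw [this]
      exact ⟨1 :: sig t, rfl⟩

lemma W_length (k : ℕ) : k + 1 ≤ (W k).length := by
  induction k with
  | zero => simp [W_zero]
  | succ k ih =>
      rw [W_succ]
      obtain ⟨t, ht⟩ := W_head k
      have h2 : sig (W k) = [0,1] ++ sig t := by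
        rw [← ht, sig_append]; rfl
      have h3 : t.length + 1 = (W k).length := by
        have := congrArg List.length ht
        simp at this; omega
      have := length_sig_ge t
      rw [h2]
      simp only [List.length_append]
      simp only [List.length_cons, List.length_nil]
      omega

lemma TR_eq_W {n k : ℕ} (h : n < (W k).length) : TR n = (W k)[n] := by
  have hTR : TR n = (W (n+1)).getD n 0 := rfl
  have hn : n < (W (n+1)).length := by have := W_length (n+1); omega
  rcases Nat.le_total k (n+1) with hle | hle
  · have hp := W_prefix hle
    rw [hTR, List.getD_eq_getElem _ _ hn, hp.getElem h]
  · have hp := W_prefix hle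
    rw [hTR, List.getD_eq_getElem _ _ hn, ← hp.getElem hn]

lemma tribMorph_mem {a x : ℕ} (h : x ∈ tribMorph a) : x = 0 ∨ x = 1 ∨ x = 2 := by
  rcases a with _|_|a <;> simp [tribMorph] at h <;> omega

lemma TR_mem (n : ℕ) : TR n = 0 ∨ TR n = 1 ∨ TR n = 2 := by
  have h : n < (W (n+1)).length := by have := W_length (n+1); omega
  have hmem : TR n ∈ W (n+1) := by
    rw [TR_eq_W h]; exact List.getElem_mem _
  rw [W_succ] at hmem
  simp only [sig, List.mem_flatten] at hmem
  obtain ⟨l, hl, hx⟩ := hmem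
  simp only [List.mem_map] at hl
  obtain ⟨a, _, rfl⟩ := hl
  exact tribMorph_mem hx

end TribAux

namespace TribAux

/-- prefix of TR of length n -/
def pref (n : ℕ) : List ℕ := (List.range n).map TR

lemma pref_length (n : ℕ) : (pref n).length = n := by simp [pref]

lemma pref_succ (n : ℕ) : pref (n + 1) = pref n ++ [TR n] := by
  simp [pref, List.range_succ]

lemma pref_getElem {i n : ℕ} (h : i < n) : (pref n)[i]'(by simp [pref_length, h]) = TR i := by
  simp [pref]

lemma pref_eq_take {n k : ℕ} (h : n ≤ (W k).length) : pref n = (W k).take n := by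
  apply List.ext_getElem
  · simp [pref_length, h]
  · intro i h1 h2
    rw [pref_getElem (by simpa [pref_length] using h1)]
    rw [List.getElem_take]
    exact TR_eq_W (by simp [pref_length] at h1; omega)

lemma pref_prefix {n k : ℕ} (h : n ≤ (W k).length) : pref n <+: W k := by
  rw [pref_eq_take h]; exact List.take_prefix _ _

/-- count of symbol s among TR 0 .. TR (n-1) -/
def cnt (s : ℕ) : ℕ → ℕ
  | 0 => 0
  | n + 1 => cnt s n + if TR n = s then 1 else 0

/-- position map: p m = m + #0s + #1s among first m letters -/
def p (m : ℕ) : ℕ := m + cnt 0 m + cnt 1 m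

lemma cnt_succ (s m : ℕ) : cnt s (m + 1) = cnt s m + if TR m = s then 1 else 0 := rfl

lemma cnt_sum (m : ℕ) : cnt 0 m + cnt 1 m + cnt 2 m = m := by
  induction m with
  | zero => rfl
  | succ m ih =>
      rw [cnt_succ, cnt_succ, cnt_succ]
      rcases TR_mem m with h|h|h <;> simp [h] <;> omega

lemma tribMorph_TR_length (m : ℕ) :
    (tribMorph (TR m)).length = 1 + (if TR m = 0 then 1 else 0) + (if TR m = 1 then 1 else 0) := by
  rcases TR_mem m with h|h|h <;> simp [h, tribMorph]

lemma p_succ (m : ℕ) : p (m + 1) = p m + (tribMorph (TR m)).length := by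
  rw [tribMorph_TR_length]
  simp only [p, cnt]
  omega

lemma length_sig_pref (m : ℕ) : (sig (pref m)).length = p m := by
  induction m with
  | zero => rfl
  | succ m ih =>
      rw [pref_succ, sig_append, List.length_append, ih, p_succ]
      congr 1
      simp [sig]

lemma sig_pref (m : ℕ) : sig (pref m) = pref (p m) := by
  have hWm : m ≤ (W m).length := by have := W_length m; omega
  have h1 : sig (pref m) <+: W (m + 1) := by
    rw [W_succ]; exact sig_prefix (pref_prefix hWm)
  set K := max (m + 1) (p m) with hK
  have h1' : sig (pref m) <+: W K := h1.trans (W_prefix (le_max_left _ _))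
  have h2 : pref (p m) <+: W K := pref_prefix (by have := W_length K; omega)
  rw [List.prefix_iff_eq_take] at h1' h2
  rw [h1', h2, length_sig_pref, pref_length]

lemma TR_p_block {m j : ℕ} (hj : j < (tribMorph (TR m)).length) :
    TR (p m + j) = (tribMorph (TR m))[j] := by
  have key : pref (p (m + 1)) = pref (p m) ++ tribMorph (TR m) := by
    rw [← sig_pref, pref_succ, sig_append, sig_pref]
    congr 1
    simp [sig]
  have hlt : p m + j < p (m + 1) := by rw [p_succ]; omega
  have h1 := pref_getElem (n := p (m+1)) (i := p m + j) hlt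
  have h2 := List.getElem_of_eq key (i := p m + j)
    (by rw [pref_length]; exact hlt)
  rw [h1] at h2
  rw [h2, List.getElem_append_right (by rw [pref_length]; omega)]
  congr 1
  rw [pref_length]; omega

lemma TR_p (m : ℕ) : TR (p m) = 0 := by
  have h0 : 0 < (tribMorph (TR m)).length := tribMorph_length_pos _
  have := TR_p_block (m := m) (j := 0) h0
  simp at this
  rcases TR_mem m with h|h|h <;> simp [h, tribMorph] at this <;> exact this

lemma TR_p1_of0 {m : ℕ} (h : TR m = 0) : TR (p m + 1) = 1 := by
  have := TR_p_block (m := m) (j := 1) (by simp [h, tribMorph])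
  simpa [h, tribMorph] using this

lemma TR_p1_of1 {m : ℕ} (h : TR m = 1) : TR (p m + 1) = 2 := by
  have := TR_p_block (m := m) (j := 1) (by simp [h, tribMorph])
  simpa [h, tribMorph] using this

lemma p_succ_of2 {m : ℕ} (h : TR m = 2) : p (m + 1) = p m + 1 := by
  rw [p_succ, tribMorph_TR_length]; simp [h]

lemma p_succ_of0 {m : ℕ} (h : TR m = 0) : p (m + 1) = p m + 2 := by
  rw [p_succ, tribMorph_TR_length]; simp [h]

lemma p_succ_of1 {m : ℕ} (h : TR m = 1) : p (m + 1) = p m + 2 := by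
  rw [p_succ, tribMorph_TR_length]; simp [h]

lemma p_zero : p 0 = 0 := rfl

lemma p_lt_succ (m : ℕ) : p m < p (m + 1) := by
  rw [p_succ]; have := tribMorph_length_pos (TR m); omega

lemma p_strictMono : StrictMono p := strictMono_nat_of_lt_succ p_lt_succ

lemma le_p (m : ℕ) : m ≤ p m := by unfold p; omega

/-- count transport: counts at p m -/
lemma cnt_p (m : ℕ) : cnt 0 (p m) = m ∧ cnt 1 (p m) = cnt 0 m ∧ cnt 2 (p m) = cnt 1 m := by
  induction m with
  | zero => exact ⟨rfl, rfl, rfl⟩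
  | succ m ih =>
      obtain ⟨h0, h1, h2⟩ := ih
      rcases TR_mem m with h|h|h
      · rw [p_succ_of0 h]
        have e1 : TR (p m) = 0 := TR_p m
        have e2 : TR (p m + 1) = 1 := TR_p1_of0 h
        have : p m + 2 = (p m + 1) + 1 := rfl
        rw [this]
        simp [cnt_succ, e1, e2, h0, h1, h2, cnt_succ 0 m, cnt_succ 1 m, h]
      · rw [p_succ_of1 h]
        have e1 : TR (p m) = 0 := TR_p m
        have e2 : TR (p m + 1) = 2 := TR_p1_of1 h
        have : p m + 2 = (p m + 1) + 1 := rfl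
        rw [this]
        simp [cnt_succ, e1, e2, h0, h1, h2, cnt_succ 0 m, cnt_succ 1 m, h]
      · rw [p_succ_of2 h]
        have e1 : TR (p m) = 0 := TR_p m
        simp [cnt_succ, e1, h0, h1, h2, cnt_succ 0 m, cnt_succ 1 m, h]

lemma cnt0_p (m : ℕ) : cnt 0 (p m) = m := (cnt_p m).1
lemma cnt1_p (m : ℕ) : cnt 1 (p m) = cnt 0 m := (cnt_p m).2.1
lemma cnt2_p (m : ℕ) : cnt 2 (p m) = cnt 1 m := (cnt_p m).2.2

end TribAux

namespace TribAux

lemma exists_p_interval (q : ℕ) : ∃ m, p m ≤ q ∧ q < p (m + 1) := by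
  induction q with
  | zero => exact ⟨0, le_refl _, p_lt_succ 0⟩
  | succ q ih =>
      obtain ⟨m, h1, h2⟩ := ih
      rcases Nat.lt_or_ge (q + 1) (p (m + 1)) with h | h
      · exact ⟨m, by omega, h⟩
      · exact ⟨m + 1, h, by have := p_lt_succ (m + 1); omega⟩

lemma p_step (m : ℕ) : p (m + 1) = p m + 1 ∨ p (m + 1) = p m + 2 := by
  rcases TR_mem m with h|h|h
  · right; exact p_succ_of0 h
  · right; exact p_succ_of1 h
  · left; exact p_succ_of2 h

lemma zero_eq {q : ℕ} (h : TR q = 0) : ∃ m, p m = q := by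
  obtain ⟨m, h1, h2⟩ := exists_p_interval q
  rcases Nat.eq_or_lt_of_le h1 with he | hlt
  · exact ⟨m, he⟩
  · exfalso
    have hq : q = p m + 1 := by rcases p_step m with h'|h' <;> omega
    rcases TR_mem m with h'|h'|h'
    · rw [hq, TR_p1_of0 h'] at h; omega
    · rw [hq, TR_p1_of1 h'] at h; omega
    · have := p_succ_of2 h'; omega

lemma one_eq {q : ℕ} (h : TR q = 1) : ∃ m, TR m = 0 ∧ p m + 1 = q := by
  obtain ⟨m, h1, h2⟩ := exists_p_interval q
  have hne : q ≠ p m := by intro he; rw [he, TR_p] at h; omega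
  have hq : q = p m + 1 := by rcases p_step m with h'|h' <;> omega
  refine ⟨m, ?_, hq.symm⟩
  rcases TR_mem m with h'|h'|h'
  · exact h'
  · rw [hq, TR_p1_of1 h'] at h; omega
  · have := p_succ_of2 h'; omega

/-- D(m+1) = b(m+1) - a(m+1) -/
def dd (m : ℕ) : ℕ := m + 1 + cnt 0 m
/-- F(m+1) = E(m+1) - D(m+1) -/
def ff (m : ℕ) : ℕ := m + 1 + cnt 1 m
/-- E(m+1) = c(m+1) - b(m+1) -/
def ee (m : ℕ) : ℕ := dd m + ff m
/-- G(m+1) = E(m+1) + D(m+1) -/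
def gg (m : ℕ) : ℕ := ee m + dd m

lemma dd_succ (m : ℕ) : dd (m + 1) = dd m + if TR m = 0 then 2 else 1 := by
  simp only [dd, cnt_succ]; split <;> omega

lemma ff_succ (m : ℕ) : ff (m + 1) = ff m + if TR m = 1 then 2 else 1 := by
  simp only [ff, cnt_succ]
  rcases TR_mem m with h|h|h <;> simp [h] <;> omega

lemma dd_strictMono : StrictMono dd := by
  apply strictMono_nat_of_lt_succ
  intro m; rw [dd_succ]; split <;> omega

lemma ff_strictMono : StrictMono ff := by
  apply strictMono_nat_of_lt_succ
  intro m; rw [ff_succ]; split <;> omega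

lemma ee_strictMono : StrictMono ee := by
  apply strictMono_nat_of_lt_succ
  intro m
  have h1 := dd_strictMono (lt_add_one m)
  have h2 := ff_strictMono (lt_add_one m)
  simp only [ee]; omega

lemma dd_zero : dd 0 = 1 := rfl
lemma ff_zero : ff 0 = 1 := rfl
lemma ee_zero : ee 0 = 2 := rfl

lemma one_le_dd (m : ℕ) : 1 ≤ dd m := by simp [dd]; omega
lemma dd_lt_ee (m : ℕ) : dd m < ee m := by
  have := one_le_dd m
  simp only [ee, ff]; omega

lemma ee_eq (m : ℕ) : ee m = p m + m + 2 := by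
  simp only [ee, dd, ff, p]; omega

/-- every E value sits one above a D value at a gap -/
lemma ee_gap (m : ℕ) : ee m = dd (p m) + 1 ∧ dd (p m + 1) = dd (p m) + 2 := by
  constructor
  · rw [ee_eq]; simp only [dd, cnt0_p]; omega
  · rw [dd_succ]; simp [TR_p m]

lemma gg_gap (m : ℕ) : gg m = ff (p (p m) + 1) + 1 ∧ ff (p (p m) + 2) = ff (p (p m) + 1) + 2 := by
  have hr1 : TR (p (p m) + 1) = 1 := TR_p1_of0 (TR_p m)
  constructor
  · have h1 : ff (p (p m) + 1) = p (p m) + 2 + cnt 1 (p (p m)) := by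
      simp only [ff, cnt_succ, TR_p (p m)]
      simp
    rw [h1, cnt1_p, cnt0_p]
    have hpp : p (p m) = p m + m + cnt 0 m := by
      have : p (p m) = p m + cnt 0 (p m) + cnt 1 (p m) := rfl
      rw [cnt0_p, cnt1_p] at this; omega
    simp only [gg, ee_eq, dd]
    omega
  · have : p (p m) + 2 = (p (p m) + 1) + 1 := rfl
    rw [this, ff_succ, hr1]; simp

lemma gg_strictMono : StrictMono gg := by
  apply strictMono_nat_of_lt_succ
  intro m
  rw [(gg_gap m).1, (gg_gap (m+1)).1]
  have h1 : p (p m) + 1 < p (p (m+1)) + 1 := by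
    have := p_strictMono (p_strictMono (lt_add_one m)); omega
  have := ff_strictMono h1
  omega

lemma dd_ne_ee (i j : ℕ) : dd i ≠ ee j := by
  obtain ⟨h1, h2⟩ := ee_gap j
  intro he
  rcases Nat.lt_or_ge i (p j + 1) with h | h
  · have : dd i ≤ dd (p j) := by
      rcases Nat.eq_or_lt_of_le (Nat.lt_succ_iff.mp h) with he'|hlt
      · rw [he']
      · exact le_of_lt (dd_strictMono hlt)
    omega
  · have : dd (p j + 1) ≤ dd i := by
      rcases Nat.eq_or_lt_of_le h with he'|hlt
      · rw [he']
      · exact le_of_lt (dd_strictMono hlt)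
    omega

lemma ff_ne_gg (i j : ℕ) : ff i ≠ gg j := by
  obtain ⟨h1, h2⟩ := gg_gap j
  intro he
  rcases Nat.lt_or_ge i (p (p j) + 2) with h | h
  · have : ff i ≤ ff (p (p j) + 1) := by
      rcases Nat.eq_or_lt_of_le (Nat.lt_succ_iff.mp h) with he'|hlt
      · rw [he']
      · exact le_of_lt (ff_strictMono hlt)
    omega
  · have : ff (p (p j) + 2) ≤ ff i := by
      rcases Nat.eq_or_lt_of_le h with he'|hlt
      · rw [he']
      · exact le_of_lt (ff_strictMono hlt)
    omega

lemma exists_seq_interval {f : ℕ → ℕ} (hf : ∀ m, f m < f (m + 1)) {N : ℕ} (h0 : f 0 ≤ N) :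
    ∃ m, f m ≤ N ∧ N < f (m + 1) := by
  induction N with
  | zero => exact ⟨0, h0, by have := hf 0; omega⟩
  | succ N ih =>
      rcases Nat.lt_or_ge N (f 0) with h | h
      · have : f 0 = N + 1 := by omega
        exact ⟨0, by omega, by have := hf 0; omega⟩
      · obtain ⟨m, h1, h2⟩ := ih h
        rcases Nat.lt_or_ge (N + 1) (f (m + 1)) with h' | h'
        · exact ⟨m, by omega, h'⟩
        · exact ⟨m + 1, h', by have := hf (m + 1); omega⟩

/-- partition: every N ≥ 1 is a D value or an E value -/
lemma dd_ee_cover {N : ℕ} (hN : 1 ≤ N) : (∃ m, dd m = N) ∨ (∃ m, ee m = N) := by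
  obtain ⟨m, h1, h2⟩ := exists_seq_interval (f := dd) (N := N)
    (fun m => dd_strictMono (lt_add_one m)) (by rw [dd_zero]; exact hN)
  rcases Nat.eq_or_lt_of_le h1 with he | hlt
  · exact Or.inl ⟨m, he⟩
  · right
    have hstep := dd_succ m
    have htr : TR m = 0 := by
      by_contra h
      simp [h] at hstep; omega
    obtain ⟨j, hj⟩ := zero_eq htr
    refine ⟨j, ?_⟩
    obtain ⟨g1, _⟩ := ee_gap j
    rw [g1, hj]
    simp [htr] at hstep
    omega

/-- partition: every N ≥ 1 is an F value or a G value -/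
lemma ff_gg_cover {N : ℕ} (hN : 1 ≤ N) : (∃ m, ff m = N) ∨ (∃ m, gg m = N) := by
  obtain ⟨m, h1, h2⟩ := exists_seq_interval (f := ff) (N := N)
    (fun m => ff_strictMono (lt_add_one m)) (by rw [ff_zero]; exact hN)
  rcases Nat.eq_or_lt_of_le h1 with he | hlt
  · exact Or.inl ⟨m, he⟩
  · right
    have hstep := ff_succ m
    have htr : TR m = 1 := by
      by_contra h
      simp [h] at hstep; omega
    obtain ⟨m', htr', hm'⟩ := one_eq htr
    obtain ⟨j, hj⟩ := zero_eq htr'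
    refine ⟨j, ?_⟩
    obtain ⟨g1, _⟩ := gg_gap j
    rw [g1, hj, hm']
    simp [htr] at hstep
    omega

lemma ff_lt_gg (m : ℕ) : ff m < gg m := by
  have := one_le_dd m
  simp only [gg, ee]; omega

lemma ee_sub_dd (m : ℕ) : ee m - dd m = ff m := by simp [ee]

lemma m_lt_dd (m : ℕ) : m < dd m := by simp [dd]; omega
lemma m_lt_ff (m : ℕ) : m < ff m := by simp [ff]; omega

end TribAux

namespace TribAux

lemma count_eq_cnt (s n : ℕ) : Nat.count (fun q => TR q = s) n = cnt s n := by
  induction n with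
  | zero => simp [cnt, Nat.count_zero]
  | succ n ih => rw [Nat.count_succ, ih, cnt_succ]

lemma nth_zero (k : ℕ) : Nat.nth (fun q => TR q = 0) k = p k := by
  have h := Nat.nth_count (p := fun q => TR q = 0) (n := p k) (TR_p k)
  rwa [count_eq_cnt, cnt0_p] at h

lemma nth_one (k : ℕ) : Nat.nth (fun q => TR q = 1) k = p (p k) + 1 := by
  have hq : TR (p (p k) + 1) = 1 := TR_p1_of0 (TR_p k)
  have hc : cnt 1 (p (p k) + 1) = k := by
    rw [cnt_succ, TR_p (p k), cnt1_p, cnt0_p]; simp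
  have h := Nat.nth_count (p := fun q => TR q = 1) (n := p (p k) + 1) hq
  rwa [count_eq_cnt, hc] at h

lemma p_p (m : ℕ) : p (p m) = p m + m + cnt 0 m := by
  have h : p (p m) = p m + cnt 0 (p m) + cnt 1 (p m) := rfl
  rw [cnt0_p, cnt1_p] at h; omega

lemma posSeq0 (m : ℕ) : posSeq 0 (m + 1) = p m + 1 := by
  simp [posSeq, nth_zero]

lemma posSeq1 (m : ℕ) : posSeq 1 (m + 1) = p (p m) + 2 := by
  simp [posSeq, nth_one]

lemma greedy_sat {n j : ℕ} (hj : j < n) :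
    dd j ≠ dd n ∧ dd j ≠ ee n ∧ ee j ≠ dd n ∧ ee j ≠ ee n ∧
    ff j ≠ ee n - dd n ∧ gg j ≠ ee n - dd n := by
  rw [ee_sub_dd]
  exact ⟨(dd_strictMono hj).ne, dd_ne_ee j n, (dd_ne_ee n j).symm,
    (ee_strictMono hj).ne, (ff_strictMono hj).ne, (ff_ne_gg n j).symm⟩

lemma greedy_xmin {n x : ℕ} (hx1 : 0 < x) (hx2 : x < dd n) :
    ∃ j, j < n ∧ (dd j = x ∨ ee j = x) := by
  rcases dd_ee_cover hx1 with ⟨j, hj⟩ | ⟨j, hj⟩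
  · exact ⟨j, dd_strictMono.lt_iff_lt.mp (by omega), Or.inl hj⟩
  · have h2 : ee j < ee n := by have := dd_lt_ee n; omega
    exact ⟨j, ee_strictMono.lt_iff_lt.mp h2, Or.inr hj⟩

lemma greedy_ymin {n y : ℕ} (h1 : dd n < y) (h2 : y < ee n) :
    ∃ j, j < n ∧ (ff j = y - dd n ∨ gg j = y - dd n) := by
  have hee : ee n = dd n + ff n := rfl
  have hd1 : 0 < y - dd n := by omega
  have hd2 : y - dd n < ff n := by omega
  rcases ff_gg_cover hd1 with ⟨j, hj⟩ | ⟨j, hj⟩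
  · exact ⟨j, ff_strictMono.lt_iff_lt.mp (by omega), Or.inl hj⟩
  · have h3 : ff j < ff n := by have := ff_lt_gg j; omega
    exact ⟨j, ff_strictMono.lt_iff_lt.mp h3, Or.inr hj⟩

end TribAux

open TribAux

/-- the predicate used in the greedy recursion -/
def Pn (n : ℕ) (x y : ℕ) : Prop :=
  0 < x ∧ x < y ∧
  ∀ k, 1 ≤ k → k < n →
    (XY k).1 ≠ x ∧ (XY k).1 ≠ y ∧ (XY k).2 ≠ x ∧ (XY k).2 ≠ y ∧
    (XY k).2 - (XY k).1 ≠ y - x ∧ (XY k).2 + (XY k).1 ≠ y - x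

lemma XY_unfold (k : ℕ) :
    XY (k + 2) = (sInf {x | ∃ y, Pn (k + 2) x y},
      sInf {y | Pn (k + 2) (sInf {x | ∃ y, Pn (k + 2) x y}) y}) := by
  rw [XY]; rfl

theorem XY_eq_s12 : ∀ n : ℕ, 1 ≤ n → XY n = (dd (n - 1), ee (n - 1)) := by
  intro n
  induction n using Nat.strong_induction_on with
  | _ n IH =>
    intro hn
    match n, hn with
    | 1, _ => rw [XY]; rfl
    | (k + 2), _ =>
      have hIH : ∀ j, j < k + 1 → XY (j + 1) = (dd j, ee j) := by
        intro j hj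
        have := IH (j + 1) (by omega) (by omega)
        simpa using this
      set n' := k + 1 with hn'
      -- translate the predicate
      have hPn : ∀ x y, Pn (k + 2) x y ↔
          (0 < x ∧ x < y ∧ ∀ j, j < n' →
            dd j ≠ x ∧ dd j ≠ y ∧ ee j ≠ x ∧ ee j ≠ y ∧ ff j ≠ y - x ∧ gg j ≠ y - x) := by
        intro x y
        constructor
        · rintro ⟨h1, h2, h3⟩
          refine ⟨h1, h2, fun j hj => ?_⟩
          have := h3 (j + 1) (by omega) (by omega)
          rw [hIH j hj] at this
          simpa [ee_sub_dd, gg, ee] using this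
        · rintro ⟨h1, h2, h3⟩
          refine ⟨h1, h2, fun kk hk1 hk2 => ?_⟩
          obtain ⟨j, rfl⟩ : ∃ j, kk = j + 1 := ⟨kk - 1, by omega⟩
          have := h3 j (by omega)
          rw [hIH j (by omega)]
          simpa [ee_sub_dd, gg, ee] using this
      have hsat : Pn (k + 2) (dd n') (ee n') := by
        rw [hPn]
        exact ⟨one_le_dd n', dd_lt_ee n', fun j hj => greedy_sat hj⟩
      have hx : sInf {x | ∃ y, Pn (k + 2) x y} = dd n' := by
        have hmem : dd n' ∈ {x | ∃ y, Pn (k + 2) x y} := ⟨ee n', hsat⟩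
        have hle : sInf {x | ∃ y, Pn (k + 2) x y} ≤ dd n' := Nat.sInf_le hmem
        rcases Nat.lt_or_ge (sInf {x | ∃ y, Pn (k + 2) x y}) (dd n') with hlt | hge
        · exfalso
          have hin := Nat.sInf_mem (⟨dd n', hmem⟩ : {x | ∃ y, Pn (k + 2) x y}.Nonempty)
          obtain ⟨y, hy⟩ := hin
          rw [hPn] at hy
          obtain ⟨h1, h2, h3⟩ := hy
          obtain ⟨j, hj, hcase⟩ := greedy_xmin h1 hlt
          have := h3 j hj
          tauto
        · omega
      have hy : sInf {y | Pn (k + 2) (dd n') y} = ee n' := by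
        have hmem : ee n' ∈ {y | Pn (k + 2) (dd n') y} := hsat
        have hle : sInf {y | Pn (k + 2) (dd n') y} ≤ ee n' := Nat.sInf_le hmem
        rcases Nat.lt_or_ge (sInf {y | Pn (k + 2) (dd n') y}) (ee n') with hlt | hge
        · exfalso
          have hin := Nat.sInf_mem (⟨ee n', hmem⟩ : {y | Pn (k + 2) (dd n') y}.Nonempty)
          rw [Set.mem_setOf_eq, hPn] at hin
          obtain ⟨h1, h2, h3⟩ := hin
          obtain ⟨j, hj, hcase⟩ := greedy_ymin h2 hlt
          have := h3 j hj
          tauto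
        · omega
      rw [XY_unfold, hx, hy]
      simp [hn']

theorem X_eq_b_sub_a (n : ℕ) : (X n : ℤ) = (posSeq 1 n : ℤ) - (posSeq 0 n : ℤ) := by
  rcases n with _ | m
  · simp [X, XY, posSeq]
  · have hXY := XY_eq_s12 (m + 1) (by omega)
    have hX : X (m + 1) = dd m := by
      rw [X, hXY]; rfl
    rw [hX, posSeq0, posSeq1]
    have hpp := p_p m
    have hdd : dd m = m + 1 + cnt 0 m := rfl
    push_cast
    omega
end
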